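/- For every n ≥ 2 and every odd positive integer ℓ, the subgroups B_n[ℓ] and B_n[2] together generate B_n; equivalently, the composite B_n[ℓ] ↪ B_n → B_n/B_n[2] is surjective. -/

import Mathlib

open Matrix

/-- The braid relations on `m` generators `σ_1, …, σ_m` (0-indexed by `Fin m`). -/
def braidRels (m : ℕ) : Set (FreeGroup (Fin m)) :=
  {r | (∃ i j : Fin m, (i : ℕ) + 1 = (j : ℕ) ∧
          r = FreeGroup.of i * FreeGroup.of j * FreeGroup.of i *
              (FreeGroup.of j * FreeGroup.of i * FreeGroup.of j)⁻¹) ∨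
       (∃ i j : Fin m, (i : ℕ) + 2 ≤ (j : ℕ) ∧
          r = FreeGroup.of i * FreeGroup.of j * (FreeGroup.of j * FreeGroup.of i)⁻¹)}

/-- The braid group on `n` strands, presented on generators `σ_1, …, σ_{n-1}`. -/
def BraidGroup (n : ℕ) : Type := PresentedGroup (braidRels (n - 1))

instance (n : ℕ) : Group (BraidGroup n) :=
  inferInstanceAs (Group (PresentedGroup (braidRels (n - 1))))

/-- The generator `σ_{k+1}` (in 1-indexed notation) of the braid group. -/
def braidGen (n : ℕ) (k : Fin (n - 1)) : BraidGroup n := PresentedGroup.of k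

/-- The matrix of the generator `σ_{k+1}` under the reduced integral Burau representation. -/
def burauMatrix (n : ℕ) (k : Fin (n - 1)) : Matrix (Fin (n - 1)) (Fin (n - 1)) ℤ :=
  Matrix.of fun a b =>
    if a = b then 1
    else if (a : ℕ) + 1 = (k : ℕ) ∧ b = k then -1
    else if (a : ℕ) = (k : ℕ) + 1 ∧ b = k then 1
    else 0

/-- `ρ` is the reduced integral Burau representation iff it takes the prescribed
values on the generators. -/
def IsBurau (n : ℕ) (ρ : BraidGroup n →* GL (Fin (n - 1)) ℤ) : Prop :=
  ∀ k : Fin (n - 1),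
    (ρ (braidGen n k) : Matrix (Fin (n - 1)) (Fin (n - 1)) ℤ) = burauMatrix n k

/-- The level `ℓ` congruence subgroup `B_n[ℓ]`: the kernel of the composition of the
reduced integral Burau representation with entrywise reduction mod `ℓ`. -/
def congSubgroup (n : ℕ) (ρ : BraidGroup n →* GL (Fin (n - 1)) ℤ) (ℓ : ℕ) :
    Subgroup (BraidGroup n) :=
  ((Matrix.GeneralLinearGroup.map (Int.castRingHom (ZMod ℓ))).comp ρ).ker

instance (n : ℕ) (ρ : BraidGroup n →* GL (Fin (n - 1)) ℤ) (ℓ : ℕ) :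
    (congSubgroup n ρ ℓ).Normal :=
  MonoidHom.normal_ker _

instance (n : ℕ) (ρ : BraidGroup n →* GL (Fin (n - 1)) ℤ) (ℓ : ℕ)
    (K : Subgroup (BraidGroup n)) : ((congSubgroup n ρ ℓ).subgroupOf K).Normal :=
  Subgroup.Normal.subgroupOf (MonoidHom.normal_ker _) K

/-! Each Burau generator is a transvection `1 + N` with `N ^ 2 = 0`, so `σ_k ^ m` maps to
`1 + m N`, which lies in `B_n[ℓ]` whenever `ℓ ∣ m`. For odd `ℓ = 2t + 1` this makes `σ_k ^ ℓ`
an element of `B_n[ℓ]` congruent to `σ_k` modulo `B_n[2]`, and the `σ_k` generate `B_n`. -/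

theorem one_add_pow_eq_one_add_nsmul {R : Type*} [Semiring R] {N : R} (hN : N * N = 0)
    (m : ℕ) : (1 + N) ^ m = 1 + m • N := by
  induction m with
  | zero => simp
  | succ m ih =>
    rw [pow_succ, ih, add_mul, one_mul, mul_add, mul_one, smul_mul_assoc, hN, smul_zero,
      add_zero, succ_nsmul]
    abel

theorem one_add_pow_eq_one {R : Type*} [Semiring R] {N : R} (hN : N * N = 0) {m : ℕ}
    (hm : (m : R) = 0) : (1 + N) ^ m = 1 := by
  rw [one_add_pow_eq_one_add_nsmul hN, nsmul_eq_mul, hm, zero_mul, add_zero]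

theorem Subgroup.sup_eq_top_of_closure_eq_top {G : Type*} [Group G] {H K : Subgroup G}
    {S : Set G} (hS : Subgroup.closure S = ⊤) (h : ∀ s ∈ S, ∃ x ∈ H, s * x⁻¹ ∈ K) :
    H ⊔ K = ⊤ := by
  rw [eq_top_iff, ← hS, Subgroup.closure_le]
  intro s hs
  obtain ⟨x, hxH, hxK⟩ := h s hs
  rw [← inv_mul_cancel_right s x]
  exact mul_mem (Subgroup.mem_sup_right hxK) (Subgroup.mem_sup_left hxH)

theorem QuotientGroup.mk'_comp_subtype_surjective_iff {G : Type*} [Group G]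
    (H N : Subgroup G) [N.Normal] :
    Function.Surjective ((QuotientGroup.mk' N).comp H.subtype) ↔ H ⊔ N = ⊤ := by
  rw [← MonoidHom.range_eq_top, MonoidHom.range_comp, Subgroup.range_subtype,
    ← (Subgroup.comap_injective (QuotientGroup.mk'_surjective N)).eq_iff,
    QuotientGroup.comap_map_mk', Subgroup.comap_top, sup_comm]

theorem closure_range_braidGen (n : ℕ) : Subgroup.closure (Set.range (braidGen n)) = ⊤ :=
  PresentedGroup.closure_range_of _

theorem burauMatrix_sub_one_apply_eq_zero {n : ℕ} {k a b : Fin (n - 1)} (h : b ≠ k ∨ a = k) :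
    (burauMatrix n k - 1) a b = 0 := by
  rcases eq_or_ne a b with rfl | hab
  · simp [burauMatrix]
  · rcases h with hb | rfl
    · simp [burauMatrix, hab, hb]
    · simp [burauMatrix, hab]

theorem burauMatrix_sub_one_mul_self (n : ℕ) (k : Fin (n - 1)) :
    (burauMatrix n k - 1) * (burauMatrix n k - 1) = 0 := by
  ext a b
  rw [Matrix.mul_apply, Matrix.zero_apply]
  refine Finset.sum_eq_zero fun c _ => ?_
  rcases eq_or_ne c k with rfl | hc
  · rw [burauMatrix_sub_one_apply_eq_zero (Or.inr rfl), mul_zero]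
  · rw [burauMatrix_sub_one_apply_eq_zero (Or.inl hc), zero_mul]

theorem braidGen_pow_mem_congSubgroup {n : ℕ} {ρ : BraidGroup n →* GL (Fin (n - 1)) ℤ}
    (hρ : IsBurau n ρ) (k : Fin (n - 1)) {ℓ m : ℕ} (h : ℓ ∣ m) :
    braidGen n k ^ m ∈ congSubgroup n ρ ℓ := by
  set f := (Int.castRingHom (ZMod ℓ)).mapMatrix (m := Fin (n - 1))
  have hN : f (burauMatrix n k - 1) * f (burauMatrix n k - 1) = 0 := by
    rw [← map_mul, burauMatrix_sub_one_mul_self, map_zero]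
  have hm : (m : Matrix (Fin (n - 1)) (Fin (n - 1)) (ZMod ℓ)) = 0 := by
    rw [← map_natCast (Matrix.scalar (Fin (n - 1))) m, (ZMod.natCast_eq_zero_iff m ℓ).2 h,
      map_zero]
  rw [congSubgroup, MonoidHom.mem_ker, MonoidHom.comp_apply, Units.ext_iff]
  calc _ = f (burauMatrix n k) ^ m := by
          rw [map_pow, map_pow, Units.val_pow_eq_pow_val, ← hρ k]
          rfl
    _ = (1 + f (burauMatrix n k - 1)) ^ m := by rw [map_sub, map_one, add_sub_cancel]
    _ = 1 := one_add_pow_eq_one hN hm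

theorem congSubgroup_sup_congSubgroup_two_general (n : ℕ) (ℓ : ℕ)
    (hodd : Odd ℓ)
    (ρ : BraidGroup n →* GL (Fin (n - 1)) ℤ) (hρ : IsBurau n ρ) :
    congSubgroup n ρ ℓ ⊔ congSubgroup n ρ 2 = ⊤ ∧
      Function.Surjective
        ((QuotientGroup.mk' (congSubgroup n ρ 2)).comp
          (congSubgroup n ρ ℓ).subtype) := by
  obtain ⟨t, rfl⟩ := hodd
  have hsup : congSubgroup n ρ (2 * t + 1) ⊔ congSubgroup n ρ 2 = ⊤ := by
    refine Subgroup.sup_eq_top_of_closure_eq_top (closure_range_braidGen n) ?_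
    rintro _ ⟨k, rfl⟩
    refine ⟨braidGen n k ^ (2 * t + 1), braidGen_pow_mem_congSubgroup hρ k dvd_rfl, ?_⟩
    rw [pow_succ, _root_.mul_inv_rev, mul_inv_cancel_left]
    exact inv_mem (braidGen_pow_mem_congSubgroup hρ k (dvd_mul_right 2 t))
  exact ⟨hsup, (QuotientGroup.mk'_comp_subtype_surjective_iff _ _).2 hsup⟩

/-- For every `n ≥ 2` and every odd positive integer `ℓ`, the subgroups `B_n[ℓ]` and
`B_n[2]` together generate `B_n`; equivalently, the composite
`B_n[ℓ] ↪ B_n → B_n/B_n[2]` is surjective. -/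
theorem congSubgroup_sup_congSubgroup_two (n : ℕ) (hn : 2 ≤ n) (ℓ : ℕ) (hℓ : 0 < ℓ)
    (hodd : Odd ℓ)
    (ρ : BraidGroup n →* GL (Fin (n - 1)) ℤ) (hρ : IsBurau n ρ) :
    congSubgroup n ρ ℓ ⊔ congSubgroup n ρ 2 = ⊤ ∧
      Function.Surjective
        ((QuotientGroup.mk' (congSubgroup n ρ 2)).comp
          (congSubgroup n ρ ℓ).subtype) :=
  congSubgroup_sup_congSubgroup_two_general n ℓ hodd ρ hρ
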